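/- Let k be a natural number, let a_1, ..., a_k be real numbers, let s_j = min(1, max(0, a_1 + ... + a_j)) for each j in [k], and let b be a real number with 0 ≤ b ≤ 1. Then the sum over j from 1 to k of a_j * (b - s_j) is at most b^2 / 2. -/
import Mathlib

noncomputable def phi0 (b x : ℝ) : ℝ :=
  (b - min 1 (max 0 x)) ^ 2 / 2 + max 0 (x - 1) * (1 - b) + max 0 (-x) * b

lemma phi0_nonneg (b x : ℝ) (hb0 : 0 ≤ b) (hb1 : b ≤ 1) : 0 ≤ phi0 b x := by
  unfold phi0
  have h1 : (0:ℝ) ≤ max 0 (x-1) := le_max_left _ _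
  have h2 : (0:ℝ) ≤ max 0 (-x) := le_max_left _ _
  nlinarith [sq_nonneg (b - min 1 (max 0 x))]

lemma phi0_key (b : ℝ) (hb0 : 0 ≤ b) (hb1 : b ≤ 1) (p q : ℝ) :
    (p - q) * (b - min 1 (max 0 p)) ≤ phi0 b q - phi0 b p := by
  unfold phi0
  rcases le_or_gt p 0 with hp | hp
  · rw [max_eq_left (by linarith : p ≤ 0), min_eq_right (by norm_num : (0:ℝ) ≤ 1),
      max_eq_left (by linarith : p - 1 ≤ 0), max_eq_right (by linarith : (0:ℝ) ≤ -p)]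
    rcases le_or_gt q 0 with hq | hq
    · rw [max_eq_left hq, min_eq_right (by norm_num : (0:ℝ) ≤ 1),
        max_eq_left (by linarith : q - 1 ≤ 0), max_eq_right (by linarith : (0:ℝ) ≤ -q)]
      nlinarith
    · rcases le_or_gt q 1 with hq1 | hq1
      · rw [max_eq_right hq.le, min_eq_right hq1,
          max_eq_left (by linarith : q - 1 ≤ 0), max_eq_left (by linarith : -q ≤ 0)]
        nlinarith [sq_nonneg q]
      · rw [max_eq_right hq.le, min_eq_left hq1.le,
          max_eq_right (by linarith : (0:ℝ) ≤ q - 1), max_eq_left (by linarith : -q ≤ 0)]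
        nlinarith
  · rcases le_or_gt p 1 with hp1 | hp1
    · rw [max_eq_right hp.le, min_eq_right hp1,
        max_eq_left (by linarith : p - 1 ≤ 0), max_eq_left (by linarith : -p ≤ 0)]
      rcases le_or_gt q 0 with hq | hq
      · rw [max_eq_left hq, min_eq_right (by norm_num : (0:ℝ) ≤ 1),
          max_eq_left (by linarith : q - 1 ≤ 0), max_eq_right (by linarith : (0:ℝ) ≤ -q)]
        nlinarith [sq_nonneg q]
      · rcases le_or_gt q 1 with hq1 | hq1
        · rw [max_eq_right hq.le, min_eq_right hq1,
            max_eq_left (by linarith : q - 1 ≤ 0), max_eq_left (by linarith : -q ≤ 0)]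
          nlinarith [sq_nonneg (p - q)]
        · rw [max_eq_right hq.le, min_eq_left hq1.le,
            max_eq_right (by linarith : (0:ℝ) ≤ q - 1), max_eq_left (by linarith : -q ≤ 0)]
          nlinarith [sq_nonneg (q - 1)]
    · rw [max_eq_right hp.le, min_eq_left hp1.le,
        max_eq_right (by linarith : (0:ℝ) ≤ p - 1), max_eq_left (by linarith : -p ≤ 0)]
      rcases le_or_gt q 0 with hq | hq
      · rw [max_eq_left hq, min_eq_right (by norm_num : (0:ℝ) ≤ 1),
          max_eq_left (by linarith : q - 1 ≤ 0), max_eq_right (by linarith : (0:ℝ) ≤ -q)]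
        nlinarith
      · rcases le_or_gt q 1 with hq1 | hq1
        · rw [max_eq_right hq.le, min_eq_right hq1,
            max_eq_left (by linarith : q - 1 ≤ 0), max_eq_left (by linarith : -q ≤ 0)]
          nlinarith [sq_nonneg (q - 1)]
        · rw [max_eq_right hq.le, min_eq_left hq1.le,
            max_eq_right (by linarith : (0:ℝ) ≤ q - 1), max_eq_left (by linarith : -q ≤ 0)]
          nlinarith

lemma phi0_main (b : ℝ) (hb0 : 0 ≤ b) (hb1 : b ≤ 1) (a : ℕ → ℝ) (k : ℕ) :
    ∑ j ∈ Finset.Icc 1 k, a j * (b - min 1 (max 0 (∑ i ∈ Finset.Icc 1 j, a i))) ≤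
      phi0 b 0 - phi0 b (∑ i ∈ Finset.Icc 1 k, a i) := by
  induction k with
  | zero => simp
  | succ n ih =>
    rw [Finset.sum_Icc_succ_top (by omega : 1 ≤ n + 1),
      Finset.sum_Icc_succ_top (by omega : 1 ≤ n + 1)]
    have hkey := phi0_key b hb0 hb1 (∑ i ∈ Finset.Icc 1 n, a i + a (n+1))
      (∑ i ∈ Finset.Icc 1 n, a i)
    have : (∑ i ∈ Finset.Icc 1 n, a i + a (n+1) - ∑ i ∈ Finset.Icc 1 n, a i)
        = a (n+1) := by ring
    rw [this] at hkey
    linarith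

/-- **Prefix sums lemma.** If `s j` is the clamp to `[0,1]` of the prefix sum
`a 1 + ⋯ + a j` and `b ∈ [0,1]`, then `∑_{j=1}^k a j * (b - s j) ≤ b^2 / 2`. -/
theorem stmt_0 (k : ℕ) (a : ℕ → ℝ) (b : ℝ) (hb : b ∈ Set.Icc (0 : ℝ) 1)
    (s : ℕ → ℝ)
    (hs : ∀ j ∈ Finset.Icc 1 k, s j = min 1 (max 0 (∑ i ∈ Finset.Icc 1 j, a i))) :
    ∑ j ∈ Finset.Icc 1 k, a j * (b - s j) ≤ b ^ 2 / 2 := by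
  obtain ⟨hb0, hb1⟩ := hb
  have h := phi0_main b hb0 hb1 a k
  rw [Finset.sum_congr rfl (fun j hj => by rw [hs j hj])]
  have h0 : phi0 b 0 = b ^ 2 / 2 := by unfold phi0; norm_num
  have hn := phi0_nonneg b (∑ i ∈ Finset.Icc 1 k, a i) hb0 hb1
  linarith
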